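/- arXiv:1810.02658 — 2 statements merged into one kernel-verified Lean document; each statement's English description precedes it below -/
import Mathlib

section
/- Let Σ be a real symmetric A×A matrix with eigenvalues μ₁, …, μ_A and orthonormal eigenvectors ψ₁, …, ψ_A, and suppose at least one μᵢ is negative. Define ηᵢ = (−μᵢ)⁺ / √(Σⱼ ((−μⱼ)⁺)²) and W = Σᵢ ηᵢ ψᵢ ψᵢᵀ. Then W is symmetric positive semidefinite, ‖W‖_F = 1, and W minimizes the function M ↦ trace(M Σ) over all symmetric positive semidefinite matrices M with ‖M‖_F = 1, with minimum value −√(Σᵢ ((−μᵢ)⁺)²). -/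
/-!
Write `N = ∑ᵢ (-μᵢ)⁺ ψᵢψᵢᵀ`, so that `W = N / ‖N‖_F` and, by orthonormality of the `ψᵢ`,
`‖N‖_F² = ∑ᵢ ((-μᵢ)⁺)²` and `trace (W Σ) = -‖N‖_F`. For a PSD `M` the numbers `ψᵢᵀ M ψᵢ` are
nonnegative, so `trace (M Σ) = ∑ᵢ μᵢ ψᵢᵀ M ψᵢ ≥ -∑ᵢ (-μᵢ)⁺ ψᵢᵀ M ψᵢ = -trace (M N)`, and
Cauchy–Schwarz for the Frobenius inner product bounds this below by `-‖M‖_F ‖N‖_F = -‖N‖_F`.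
-/

open Matrix Finset

namespace Matrix

variable {n ι : Type*} [Fintype n] [Fintype ι]

lemma trace_mul_vecMulVec_self (M : Matrix n n ℝ) (v : n → ℝ) :
    (M * vecMulVec v v).trace = v ⬝ᵥ M *ᵥ v := by
  rw [mul_vecMulVec, trace_vecMulVec, dotProduct_comm]

lemma sum_sq_eq_trace_mul_transpose (M : Matrix n n ℝ) :
    ∑ i, ∑ j, M i j ^ 2 = (M * Mᵀ).trace := by
  simp [trace, mul_apply, sq]

lemma trace_mul_le_sqrt_sum_sq_mul_sqrt_sum_sq (M N : Matrix n n ℝ) :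
    (M * N).trace ≤ √(∑ i, ∑ j, M i j ^ 2) * √(∑ i, ∑ j, N i j ^ 2) := by
  have h := Real.sum_mul_le_sqrt_mul_sqrt univ (fun p : n × n => M p.1 p.2)
    (fun p => N p.2 p.1)
  simp only [univ_product_univ.symm, sum_product] at h
  rwa [sum_comm (f := fun i j => N j i ^ 2)] at h

variable (ψ : ι → n → ℝ)

lemma trace_mul_sum_smul_vecMulVec (M : Matrix n n ℝ) (c : ι → ℝ) :
    (M * ∑ i, c i • vecMulVec (ψ i) (ψ i)).trace = ∑ i, c i * (ψ i ⬝ᵥ M *ᵥ ψ i) := by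
  simp [mul_sum, trace_sum, trace_smul, trace_mul_vecMulVec_self]

lemma posSemidef_sum_smul_vecMulVec {c : ι → ℝ} (hc : ∀ i, 0 ≤ c i) :
    (∑ i, c i • vecMulVec (ψ i) (ψ i)).PosSemidef :=
  posSemidef_sum _ fun i _ => (posSemidef_vecMulVec_self_star (ψ i)).smul (hc i)

variable [DecidableEq ι] {ψ}

lemma dotProduct_sum_smul_vecMulVec_mulVec
    (horth : ∀ i j, ψ i ⬝ᵥ ψ j = if i = j then 1 else 0) (c : ι → ℝ) (k : ι) :
    ψ k ⬝ᵥ (∑ i, c i • vecMulVec (ψ i) (ψ i)) *ᵥ ψ k = c k := by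
  simp [sum_mulVec, smul_mulVec, vecMulVec_mulVec, horth]

lemma sum_sq_sum_smul_vecMulVec
    (horth : ∀ i j, ψ i ⬝ᵥ ψ j = if i = j then 1 else 0) (c : ι → ℝ) :
    ∑ i, ∑ j, (∑ k, c k • vecMulVec (ψ k) (ψ k)) i j ^ 2 = ∑ k, c k ^ 2 := by
  rw [sum_sq_eq_trace_mul_transpose, transpose_sum]
  simp only [transpose_smul, transpose_vecMulVec, trace_mul_sum_smul_vecMulVec,
    dotProduct_sum_smul_vecMulVec_mulVec horth, sq]

lemma neg_sqrt_mul_sqrt_le_trace_mul_sum_smul_vecMulVec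
    (horth : ∀ i j, ψ i ⬝ᵥ ψ j = if i = j then 1 else 0) (μ : ι → ℝ) {M : Matrix n n ℝ}
    (hM : M.PosSemidef) :
    -(√(∑ i, ∑ j, M i j ^ 2) * √(∑ k, max (-μ k) 0 ^ 2)) ≤
      (M * ∑ k, μ k • vecMulVec (ψ k) (ψ k)).trace := by
  set N := ∑ k, max (-μ k) 0 • vecMulVec (ψ k) (ψ k)
  have hN : ∑ i, ∑ j, N i j ^ 2 = ∑ k, max (-μ k) 0 ^ 2 := sum_sq_sum_smul_vecMulVec horth _
  calc -(√(∑ i, ∑ j, M i j ^ 2) * √(∑ k, max (-μ k) 0 ^ 2))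
      ≤ -(M * N).trace := by
        rw [← hN]
        exact neg_le_neg (trace_mul_le_sqrt_sum_sq_mul_sqrt_sum_sq M N)
    _ = ∑ k, -max (-μ k) 0 * (ψ k ⬝ᵥ M *ᵥ ψ k) := by
        rw [trace_mul_sum_smul_vecMulVec, ← sum_neg_distrib]
        simp only [neg_mul]
    _ ≤ ∑ k, μ k * (ψ k ⬝ᵥ M *ᵥ ψ k) := sum_le_sum fun k _ =>
        mul_le_mul_of_nonneg_right (neg_le.1 (le_max_left _ _))
          (by simpa using hM.dotProduct_mulVec_nonneg (ψ k))
    _ = (M * ∑ k, μ k • vecMulVec (ψ k) (ψ k)).trace :=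
        (trace_mul_sum_smul_vecMulVec ψ M μ).symm

end Matrix

lemma mul_max_neg_zero {α : Type*} [Ring α] [LinearOrder α] [IsStrictOrderedRing α] (x : α) :
    x * max (-x) 0 = -max (-x) 0 ^ 2 := by
  rcases le_total x 0 with h | h
  · rw [max_eq_left (neg_nonneg.2 h)]; simp [sq]
  · rw [max_eq_right (neg_nonpos.2 h)]; simp [sq]

/-- Theorem 1 of IMMIGRATE: given a symmetric `Σ` with orthonormal eigenvectors
`ψ i` and eigenvalues `μ i`, at least one negative, the matrix
`W = ∑ i, ηᵢ ψᵢψᵢᵀ` with `ηᵢ = (-μᵢ)⁺ / √(∑ⱼ ((-μⱼ)⁺)²)` is symmetric PSD with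
unit Frobenius norm and minimizes `M ↦ trace (M Σ)` over symmetric PSD matrices
of unit Frobenius norm, with minimum value `-√(∑ i ((-μᵢ)⁺)²)`. -/
theorem immigrate_theorem_one (A : ℕ)
    (S : Matrix (Fin A) (Fin A) ℝ) (ψ : Fin A → Fin A → ℝ) (μ : Fin A → ℝ)
    (horth : ∀ i j, (ψ i) ⬝ᵥ (ψ j) = if i = j then 1 else 0)
    (hS : S = ∑ i, μ i • vecMulVec (ψ i) (ψ i))
    (hneg : ∃ i, μ i < 0)
    (η : Fin A → ℝ)
    (hη : η = fun i => max (-μ i) 0 / Real.sqrt (∑ j, (max (-μ j) 0) ^ 2))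
    (W : Matrix (Fin A) (Fin A) ℝ)
    (hW : W = ∑ i, η i • vecMulVec (ψ i) (ψ i)) :
    W.PosSemidef ∧
    Real.sqrt (∑ i, ∑ j, W i j ^ 2) = 1 ∧
    (W * S).trace = -Real.sqrt (∑ i, (max (-μ i) 0) ^ 2) ∧
    ∀ M : Matrix (Fin A) (Fin A) ℝ, M.PosSemidef →
      Real.sqrt (∑ i, ∑ j, M i j ^ 2) = 1 →
      (W * S).trace ≤ (M * S).trace := by
  set s := √(∑ j, max (-μ j) 0 ^ 2)
  have hsum : 0 < ∑ j, max (-μ j) 0 ^ 2 := by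
    obtain ⟨i, hi⟩ := hneg
    exact sum_pos' (fun j _ => sq_nonneg _)
      ⟨i, mem_univ i, pow_pos (lt_max_of_lt_left (neg_pos.2 hi)) 2⟩
  have hs : 0 < s := Real.sqrt_pos.2 hsum
  have hs2 : s ^ 2 = ∑ j, max (-μ j) 0 ^ 2 := Real.sq_sqrt hsum.le
  have hWS : (W * S).trace = -s := by
    rw [hS, trace_mul_sum_smul_vecMulVec, hW]
    simp only [dotProduct_sum_smul_vecMulVec_mulVec horth, hη, mul_div_assoc', ← sum_div,
      mul_max_neg_zero, sum_neg_distrib]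
    rw [← hs2, neg_div, sq, mul_div_cancel_right₀ _ hs.ne']
  refine ⟨?_, ?_, hWS, fun M hM hMn => ?_⟩
  · exact hW ▸ posSemidef_sum_smul_vecMulVec ψ fun i => hη ▸ div_nonneg (le_max_right _ _) hs.le
  · rw [hW, sum_sq_sum_smul_vecMulVec horth, hη]
    simp only [div_pow, ← sum_div]
    rw [← hs2, div_self (pow_pos hs 2).ne', Real.sqrt_one]
  · rw [hWS, hS]
    simpa [hMn] using
      neg_sqrt_mul_sqrt_le_trace_mul_sum_smul_vecMulVec horth μ hM
end

section
/- For any symmetric matrix Σ with eigenvalues μ₁ ≥ ⋯ ≥ μ_A and any symmetric positive semidefinite matrix M with ‖M‖_F = 1, trace(M Σ) ≥ −‖(−μ)⁺‖₂, i.e., trace(M Σ) ≥ −√(Σᵢ (max(−μᵢ, 0))²). -/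
/-!
Write `c i = ψ i ⬝ᵥ M *ᵥ ψ i`. Expanding `S` in its eigenbasis gives
`trace (M * S) = ∑ i, μ i * c i`, where `c i ≥ 0` because `M` is positive semidefinite.
The rank-one matrices `ψ i ψ iᵀ` are orthonormal for the Frobenius inner product and
`c i` is the inner product of `M` with the `i`-th of them, so Bessel's inequality gives
`∑ i, c i ^ 2 ≤ ‖M‖_F ^ 2 = 1`. Finally `μ i * c i ≥ -(max (-μ i) 0) * c i`, and
Cauchy–Schwarz bounds `∑ i, max (-μ i) 0 * c i` by `‖(-μ)⁺‖₂ * ‖c‖₂ ≤ ‖(-μ)⁺‖₂`.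
-/

open Matrix

namespace Matrix

variable {m n : Type*} [Fintype m] [Fintype n]

noncomputable def frobeniusLp (X : Matrix m n ℝ) : PiLp 2 (fun _ : m => EuclideanSpace ℝ n) :=
  WithLp.toLp 2 fun i => WithLp.toLp 2 (X i)

theorem inner_frobeniusLp (X Y : Matrix m n ℝ) :
    inner ℝ (frobeniusLp X) (frobeniusLp Y) = ∑ i, ∑ j, X i j * Y i j := by
  simp [frobeniusLp, PiLp.inner_apply, mul_comm]

theorem norm_frobeniusLp_sq (X : Matrix m n ℝ) :
    ‖frobeniusLp X‖ ^ 2 = ∑ i, ∑ j, X i j ^ 2 := by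
  rw [← real_inner_self_eq_norm_sq, inner_frobeniusLp]
  simp only [sq]

theorem inner_frobeniusLp_vecMulVec (u : m → ℝ) (v : n → ℝ) (X : Matrix m n ℝ) :
    inner ℝ (frobeniusLp (vecMulVec u v)) (frobeniusLp X) = u ⬝ᵥ X *ᵥ v := by
  simp only [inner_frobeniusLp, vecMulVec_apply, dotProduct, mulVec, Finset.mul_sum, mul_assoc]
  exact Finset.sum_congr rfl fun _ _ => Finset.sum_congr rfl fun _ _ => by ring

theorem orthonormal_frobeniusLp_vecMulVec_self {ι : Type*} [DecidableEq ι] {ψ : ι → n → ℝ}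
    (horth : ∀ i j, ψ i ⬝ᵥ ψ j = if i = j then 1 else 0) :
    Orthonormal ℝ fun i => frobeniusLp (vecMulVec (ψ i) (ψ i)) := by
  rw [orthonormal_iff_ite]
  intro i j
  rw [inner_frobeniusLp_vecMulVec, vecMulVec_mulVec]
  rcases eq_or_ne i j with rfl | hij
  · simp [horth]
  · simp [horth, hij, hij.symm]

theorem sum_sq_dotProduct_mulVec_le {ι : Type*} [Fintype ι] [DecidableEq ι] {ψ : ι → n → ℝ}
    (horth : ∀ i j, ψ i ⬝ᵥ ψ j = if i = j then 1 else 0) (M : Matrix n n ℝ) :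
    ∑ i, (ψ i ⬝ᵥ M *ᵥ ψ i) ^ 2 ≤ ∑ i, ∑ j, M i j ^ 2 := by
  simpa [inner_frobeniusLp_vecMulVec, norm_frobeniusLp_sq] using
    (orthonormal_frobeniusLp_vecMulVec_self horth).sum_inner_products_le (frobeniusLp M)
      (s := Finset.univ)

theorem trace_mul_sum_smul_vecMulVec_self {R ι : Type*} [CommSemiring R] [Fintype ι]
    (M : Matrix n n R) (μ : ι → R) (ψ : ι → n → R) :
    (M * ∑ i, μ i • vecMulVec (ψ i) (ψ i)).trace = ∑ i, μ i * (ψ i ⬝ᵥ M *ᵥ ψ i) := by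
  rw [Finset.mul_sum, trace_sum]
  refine Finset.sum_congr rfl fun i _ => ?_
  rw [Matrix.mul_smul, trace_smul, mul_vecMulVec, trace_vecMulVec, dotProduct_comm, smul_eq_mul]

end Matrix

theorem neg_sqrt_sum_sq_max_neg_le_sum_mul {ι : Type*} [Fintype ι] (μ c : ι → ℝ)
    (hc : ∀ i, 0 ≤ c i) (hc_sq : ∑ i, c i ^ 2 ≤ 1) :
    -√(∑ i, max (-μ i) 0 ^ 2) ≤ ∑ i, μ i * c i := by
  have h_cs : ∑ i, max (-μ i) 0 * c i ≤ √(∑ i, max (-μ i) 0 ^ 2) :=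
    calc ∑ i, max (-μ i) 0 * c i
        ≤ √(∑ i, max (-μ i) 0 ^ 2) * √(∑ i, c i ^ 2) := Real.sum_mul_le_sqrt_mul_sqrt _ _ _
      _ ≤ √(∑ i, max (-μ i) 0 ^ 2) :=
        mul_le_of_le_one_right (Real.sqrt_nonneg _) (Real.sqrt_le_one.mpr hc_sq)
  calc -√(∑ i, max (-μ i) 0 ^ 2)
      ≤ ∑ i, -max (-μ i) 0 * c i := by
        rw [← neg_le_neg_iff, neg_neg, ← Finset.sum_neg_distrib]
        simpa using h_cs
    _ ≤ ∑ i, μ i * c i := by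
        gcongr with i
        · exact hc i
        · exact neg_le.mpr (le_max_left _ _)

/-- Lower-bound half of IMMIGRATE's Theorem 1: for a symmetric matrix `Σ` with
orthonormal eigenvectors `ψ i` and eigenvalues `μ i`, and any symmetric PSD
matrix `M` with unit Frobenius norm,
`trace (M Σ) ≥ -√(∑ i, (max (-μ i) 0)²)`. -/
theorem trace_lower_bound (A : ℕ)
    (S : Matrix (Fin A) (Fin A) ℝ) (ψ : Fin A → Fin A → ℝ) (μ : Fin A → ℝ)
    (horth : ∀ i j, (ψ i) ⬝ᵥ (ψ j) = if i = j then 1 else 0)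
    (hS : S = ∑ i, μ i • vecMulVec (ψ i) (ψ i))
    (M : Matrix (Fin A) (Fin A) ℝ) (hM : M.PosSemidef)
    (hMF : Real.sqrt (∑ i, ∑ j, M i j ^ 2) = 1) :
    -Real.sqrt (∑ i, (max (-μ i) 0) ^ 2) ≤ (M * S).trace := by
  have hM_frob : ∑ i, ∑ j, M i j ^ 2 = 1 := Real.sqrt_eq_one.mp hMF
  have hc : ∀ i, 0 ≤ ψ i ⬝ᵥ M *ᵥ ψ i := fun i => by
    simpa using hM.dotProduct_mulVec_nonneg (ψ i)
  rw [hS, trace_mul_sum_smul_vecMulVec_self]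
  exact neg_sqrt_sum_sq_max_neg_le_sum_mul μ _ hc (hM_frob ▸ sum_sq_dotProduct_mulVec_le horth M)
end
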